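/- Fix r > 1/2 and define y(s,r) = 4r·(Γ((s+2r+1)/(4r))·Γ((s+4r−1)/(4r)))/(Γ((s+1)/(4r))·Γ((s+2r−1)/(4r))) for s > 0. Then the function f(s) = ∂/∂s (ln y)(s,r) is the unique function on (0, ∞) tending to 0 at +∞ that satisfies the functional equation f(s) + f(s+2r) = 1/(s+1) + 1/(s+2r−1) = 2(s+r)/((s+1)(s+2r−1)) for all s > 0. -/

import Mathlib

open Filter Real

/-- Numerators of the convergents of a generalized continued fraction with
integer part `b₀`, partial numerators `a n` and partial denominators `b n` (for `n ≥ 1`). -/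
noncomputable def cfNum (b₀ : ℝ) (a b : ℕ → ℝ) : ℕ → ℝ
  | 0 => b₀
  | 1 => b 1 * b₀ + a 1
  | n + 2 => b (n + 2) * cfNum b₀ a b (n + 1) + a (n + 2) * cfNum b₀ a b n

/-- Denominators of the convergents of a generalized continued fraction. -/
noncomputable def cfDen (a b : ℕ → ℝ) : ℕ → ℝ
  | 0 => 1
  | 1 => b 1
  | n + 2 => b (n + 2) * cfDen a b (n + 1) + a (n + 2) * cfDen a b n

/-- `IsCFLimit b₀ a b L` means: the convergents of the generalized continued fraction
`b₀ + a 1 / (b 1 + a 2 / (b 2 + ⋯))` tend to `L`. -/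
def IsCFLimit (b₀ : ℝ) (a b : ℕ → ℝ) (L : ℝ) : Prop :=
  Filter.Tendsto (fun n => cfNum b₀ a b n / cfDen a b n) Filter.atTop (nhds L)

/-- The generalized Brouncker function `y(s, r)` expressed through the Gamma function. -/
noncomputable def yGen (r s : ℝ) : ℝ :=
  4 * r * (Real.Gamma ((s + 2*r + 1) / (4*r)) * Real.Gamma ((s + 4*r - 1) / (4*r))) /
    (Real.Gamma ((s + 1) / (4*r)) * Real.Gamma ((s + 2*r - 1) / (4*r)))

/-!
With `a = (s + 1) / (4r)` and `b = (s + 2r - 1) / (4r)` one has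
`y(s) = 4r · Γ(a + ½)/Γ(a) · Γ(b + ½)/Γ(b)`,
and shifting `s` by `2r` shifts `a` and `b` by `½`.
Hence `(log y)'(s) = (δ(a) + δ(b)) / (4r)` with `δ(x) = ψ(x + ½) - ψ(x)`, `ψ = (log Γ)'`.
The functional equation is `δ(x) + δ(x + ½) = ψ(x + 1) - ψ(x) = 1/x`, and since `ψ` is
increasing (log-convexity of `Γ`), `0 ≤ δ(x) ≤ 1/x`, so `(log y)' → 0`.
Uniqueness: the difference `d` of two solutions satisfies `d(s + 2r) = -d(s)`, so `|d|` is
`2r`-periodic on `(0, ∞)` and tends to `0`, hence vanishes.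
-/

open Set

noncomputable def digamma (x : ℝ) : ℝ := deriv (fun t => log (Gamma t)) x

lemma differentiableAt_log_Gamma {x : ℝ} (hx : 0 < x) :
    DifferentiableAt ℝ (fun t => log (Gamma t)) x :=
  (differentiableAt_Gamma fun m => ((neg_nonpos.mpr (Nat.cast_nonneg m)).trans_lt hx).ne').log
    (Gamma_pos_of_pos hx).ne'

lemma hasDerivAt_log_Gamma {x : ℝ} (hx : 0 < x) :
    HasDerivAt (fun t => log (Gamma t)) (digamma x) x :=
  (differentiableAt_log_Gamma hx).hasDerivAt

lemma digamma_monotoneOn : MonotoneOn digamma (Ioi 0) :=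
  convexOn_log_Gamma.monotoneOn_deriv fun _ hx => differentiableAt_log_Gamma hx

lemma digamma_add_one {x : ℝ} (hx : 0 < x) : digamma (x + 1) = digamma x + x⁻¹ := by
  have hshift : HasDerivAt (fun t => log (Gamma (t + 1))) (digamma (x + 1)) x :=
    (hasDerivAt_log_Gamma (by linarith)).comp_add_const x 1
  have hrec : (fun t => log (Gamma t) + log t) =ᶠ[nhds x] fun t => log (Gamma (t + 1)) := by
    filter_upwards [eventually_gt_nhds hx] with t ht
    rw [Gamma_add_one ht.ne', log_mul ht.ne' (Gamma_pos_of_pos ht).ne', add_comm]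
  exact (((hasDerivAt_log_Gamma hx).add (hasDerivAt_log hx.ne')).congr_of_eventuallyEq
    hrec.symm).unique hshift |>.symm

noncomputable def logGammaHalfRatio (x : ℝ) : ℝ := log (Gamma (x + 1 / 2)) - log (Gamma x)

noncomputable def digammaHalfDiff (x : ℝ) : ℝ := digamma (x + 1 / 2) - digamma x

lemma hasDerivAt_logGammaHalfRatio {x : ℝ} (hx : 0 < x) :
    HasDerivAt logGammaHalfRatio (digammaHalfDiff x) x :=
  ((hasDerivAt_log_Gamma (by linarith)).comp_add_const x (1 / 2)).sub (hasDerivAt_log_Gamma hx)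

lemma digammaHalfDiff_add_digammaHalfDiff_add_half {x : ℝ} (hx : 0 < x) :
    digammaHalfDiff x + digammaHalfDiff (x + 1 / 2) = x⁻¹ := by
  rw [digammaHalfDiff, digammaHalfDiff, add_assoc, add_halves, digamma_add_one hx]
  ring

lemma digammaHalfDiff_nonneg {x : ℝ} (hx : 0 < x) : 0 ≤ digammaHalfDiff x :=
  sub_nonneg.mpr <| digamma_monotoneOn hx (mem_Ioi.mpr (by linarith)) (by linarith)

lemma digammaHalfDiff_le_inv {x : ℝ} (hx : 0 < x) : digammaHalfDiff x ≤ x⁻¹ := by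
  have hmono := digamma_monotoneOn (a := x + 1 / 2) (b := x + 1) (mem_Ioi.mpr (by linarith))
    (mem_Ioi.mpr (by linarith)) (by linarith)
  rw [digamma_add_one hx] at hmono
  rw [digammaHalfDiff]
  linarith

lemma tendsto_digammaHalfDiff_atTop : Tendsto digammaHalfDiff atTop (nhds 0) :=
  squeeze_zero' ((eventually_gt_atTop 0).mono fun _ hx => digammaHalfDiff_nonneg hx)
    ((eventually_gt_atTop 0).mono fun _ hx => digammaHalfDiff_le_inv hx) tendsto_inv_atTop_zero

lemma eq_zero_of_add_shift_eq_zero {d : ℝ → ℝ} {p : ℝ} (hp : 0 < p)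
    (hd : ∀ s, 0 < s → d s + d (s + p) = 0) (hlim : Tendsto d atTop (nhds 0)) {s : ℝ}
    (hs : 0 < s) : d s = 0 := by
  have habs : ∀ n : ℕ, |d (s + n * p)| = |d s| := by
    intro n
    induction n with
    | zero => simp
    | succ n ih =>
      have hpos : 0 < s + n * p := by positivity
      rw [Nat.cast_succ, add_one_mul, ← add_assoc, eq_neg_of_add_eq_zero_right (hd _ hpos),
        abs_neg, ih]
  have hshift : Tendsto (fun n : ℕ => s + n * p) atTop atTop :=
    tendsto_atTop_add_const_left _ s (tendsto_natCast_atTop_atTop.atTop_mul_const hp)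
  have hconst := (hlim.comp hshift).abs
  simp only [Function.comp_def, habs, abs_zero] at hconst
  exact abs_eq_zero.mp (tendsto_nhds_unique tendsto_const_nhds hconst)

lemma yGen_eq_mul_gammaHalfRatio {r : ℝ} (hr : r ≠ 0) (s : ℝ) :
    yGen r s = 4 * r * (Gamma ((s + 1) / (4 * r) + 1 / 2) / Gamma ((s + 1) / (4 * r))) *
      (Gamma ((s + 2 * r - 1) / (4 * r) + 1 / 2) / Gamma ((s + 2 * r - 1) / (4 * r))) := by
  have ha : (s + 2 * r + 1) / (4 * r) = (s + 1) / (4 * r) + 1 / 2 := by field_simp; ring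
  have hb : (s + 4 * r - 1) / (4 * r) = (s + 2 * r - 1) / (4 * r) + 1 / 2 := by field_simp; ring
  rw [yGen, ha, hb]
  ring

lemma log_yGen_eq {r s : ℝ} (hr : 1 / 2 < r) (hs : 0 < s) :
    log (yGen r s) = log (4 * r) + logGammaHalfRatio ((s + 1) / (4 * r)) +
      logGammaHalfRatio ((s + 2 * r - 1) / (4 * r)) := by
  have ha : 0 < (s + 1) / (4 * r) := div_pos (by linarith) (by linarith)
  have hb : 0 < (s + 2 * r - 1) / (4 * r) := div_pos (by linarith) (by linarith)
  rw [yGen_eq_mul_gammaHalfRatio (by linarith), log_mul (by positivity) (by positivity),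
    log_mul (by positivity) (by positivity), log_div (by positivity) (by positivity),
    log_div (by positivity) (by positivity), logGammaHalfRatio, logGammaHalfRatio]

lemma hasDerivAt_logGammaHalfRatio_affine {c k s : ℝ} (h : 0 < (s + c) / k) :
    HasDerivAt (fun t => logGammaHalfRatio ((t + c) / k))
      (digammaHalfDiff ((s + c) / k) / k) s := by
  have := (hasDerivAt_logGammaHalfRatio h).comp s (((hasDerivAt_id' s).add_const c).div_const k)
  rwa [mul_one_div] at this

lemma deriv_log_yGen {r s : ℝ} (hr : 1 / 2 < r) (hs : 0 < s) :
    deriv (fun t => log (yGen r t)) s =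
      (digammaHalfDiff ((s + 1) / (4 * r)) + digammaHalfDiff ((s + 2 * r - 1) / (4 * r))) /
        (4 * r) := by
  have hsum := ((hasDerivAt_logGammaHalfRatio_affine (c := 1) (k := 4 * r) (s := s)
    (div_pos (by linarith) (by linarith))).add (hasDerivAt_logGammaHalfRatio_affine
      (c := 2 * r - 1) (k := 4 * r) (s := s) (div_pos (by linarith) (by linarith)))).const_add
    (log (4 * r))
  refine (hsum.congr_of_eventuallyEq ?_).deriv.trans ?_
  · filter_upwards [eventually_gt_nhds hs] with t ht
    rw [log_yGen_eq hr ht, add_sub_assoc, Pi.add_apply, add_assoc]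
  · rw [add_sub_assoc]
    exact (add_div _ _ _).symm

lemma deriv_log_yGen_add_deriv_log_yGen_add {r s : ℝ} (hr : 1 / 2 < r) (hs : 0 < s) :
    deriv (fun t => log (yGen r t)) s + deriv (fun t => log (yGen r t)) (s + 2 * r) =
      1 / (s + 1) + 1 / (s + 2 * r - 1) := by
  have ha : (s + 2 * r + 1) / (4 * r) = (s + 1) / (4 * r) + 1 / 2 := by field_simp; ring
  have hb : (s + 2 * r + 2 * r - 1) / (4 * r) = (s + 2 * r - 1) / (4 * r) + 1 / 2 := by
    field_simp; ring
  rw [deriv_log_yGen hr hs, deriv_log_yGen hr (by linarith), ha, hb, ← add_div,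
    add_add_add_comm, digammaHalfDiff_add_digammaHalfDiff_add_half (by positivity),
    digammaHalfDiff_add_digammaHalfDiff_add_half (div_pos (by linarith) (by linarith))]
  field_simp

lemma tendsto_deriv_log_yGen_atTop {r : ℝ} (hr : 1 / 2 < r) :
    Tendsto (deriv fun t => log (yGen r t)) atTop (nhds 0) := by
  have haffine (c : ℝ) : Tendsto (fun s => (s + c) / (4 * r)) atTop atTop :=
    (tendsto_atTop_add_const_right _ c tendsto_id).atTop_div_const (by linarith)
  have hlim := ((tendsto_digammaHalfDiff_atTop.comp (haffine 1)).add
    (tendsto_digammaHalfDiff_atTop.comp (haffine (2 * r - 1)))).div_const (4 * r)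
  rw [zero_add, zero_div] at hlim
  refine hlim.congr' ?_
  filter_upwards [eventually_gt_atTop 0] with s hs
  rw [deriv_log_yGen hr hs, add_sub_assoc]
  rfl

theorem first_log_deriv_functional_equation (r : ℝ) (hr : 1 / 2 < r) :
    (∀ s : ℝ, 0 < s →
        deriv (fun t : ℝ => Real.log (yGen r t)) s +
          deriv (fun t : ℝ => Real.log (yGen r t)) (s + 2 * r) =
        1 / (s + 1) + 1 / (s + 2 * r - 1)) ∧
    (∀ s : ℝ, 0 < s →
        1 / (s + 1) + 1 / (s + 2 * r - 1) = 2 * (s + r) / ((s + 1) * (s + 2 * r - 1))) ∧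
    Tendsto (fun s : ℝ => deriv (fun t : ℝ => Real.log (yGen r t)) s) atTop (nhds 0) ∧
    ∀ f : ℝ → ℝ,
      (∀ s : ℝ, 0 < s → f s + f (s + 2 * r) = 1 / (s + 1) + 1 / (s + 2 * r - 1)) →
      Tendsto f atTop (nhds 0) →
      ∀ s : ℝ, 0 < s → f s = deriv (fun t : ℝ => Real.log (yGen r t)) s := by
  refine ⟨fun s hs => deriv_log_yGen_add_deriv_log_yGen_add hr hs, fun s hs => ?_,
    tendsto_deriv_log_yGen_atTop hr, fun f hf hflim s hs => ?_⟩
  · have : s + 2 * r - 1 ≠ 0 := by linarith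
    field_simp
    ring
  · have hlim := hflim.sub (tendsto_deriv_log_yGen_atTop hr)
    rw [sub_zero] at hlim
    refine sub_eq_zero.mp
      (eq_zero_of_add_shift_eq_zero (p := 2 * r) (by linarith) (fun t ht => ?_) hlim hs)
    linarith [hf t ht, deriv_log_yGen_add_deriv_log_yGen_add hr ht]
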